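/- arXiv:1902.06547 — 4 statements merged into one kernel-verified Lean document; each statement's English description precedes it below -/
import Mathlib

section
/- Let ℓ: ℝ × ℝ → ℝ be a loss function such that ℓ(y,·) is convex for every y. Then the optimal value of the ℓ₂-regularized cardinality-constrained problem, inf over w ∈ ℝ^p with ‖w‖₀ ≤ k of Σ_{i=1}^n ℓ(y_i, x_iᵀw) + (1/(2γ))‖w‖₂², equals the optimal value of the convex integer min–max problem, inf over s ∈ {0,1}^p with Σ_{j=1}^p s_j ≤ k of sup_{α ∈ ℝ^n} f(α,s) (equality of values in the extended reals). -/
/-!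
A vector with at most `k` nonzero entries is exactly `s * w` for a `0/1` vector `s` with
`∑ j, s j ≤ k`, so both sides are infima over such masks `s`, and it suffices to prove strong
duality for the ridge problem restricted to the columns selected by `s`. Weak duality is the
Fenchel–Young inequality plus completing the square. For the converse, perturb the argument of
the loss by `u`: the optimal value `φ u` of the perturbed problem is finite (the loss has an affine
minorant) and convex, so Hahn–Banach gives a subgradient `β` of `φ` at `0`, and `β` is an optimal
dual vector; the inner minimisation over `w` is attained at `w = -γ Xᵀ β`.
-/

open Classical in
/-- The `ℓ₀` pseudo-norm: the number of nonzero entries of `w`. -/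
noncomputable def norm0 {p : ℕ} (w : Fin p → ℝ) : ℕ :=
  (Finset.univ.filter fun j => w j ≠ 0).card

open Set Matrix Finset

theorem ConvexOn.exists_subgradient {E : Type*} [NormedAddCommGroup E] [NormedSpace ℝ E]
    {φ : E → ℝ} (hφ : ConvexOn ℝ univ φ) (hcont : Continuous φ) (x₀ : E) :
    ∃ g : StrongDual ℝ E, ∀ x, φ x₀ + g (x - x₀) ≤ φ x := by
  have hS : IsOpen {q : E × ℝ | q.1 ∈ univ ∧ φ q.1 < q.2} := by
    simpa using isOpen_lt (hcont.comp continuous_fst) continuous_snd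
  obtain ⟨F, hF⟩ := geometric_hahn_banach_open_point hφ.convex_strict_epigraph hS
    (x := (x₀, φ x₀)) (by simp)
  set c := F (0, 1)
  have hsplit : ∀ x t, F (x, t) = F (x, 0) + t * c := fun x t => by
    rw [show (x, t) = (x, 0) + t • ((0 : E), (1 : ℝ)) by simp, map_add, map_smul, smul_eq_mul]
  have hc : 0 < -c := by
    have := hF (x₀, φ x₀ + 1) (by simp)
    rw [hsplit x₀ (φ x₀ + 1), hsplit x₀ (φ x₀)] at this
    linarith
  refine ⟨(-c)⁻¹ • F.comp (.inl ℝ E ℝ), fun x => ?_⟩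
  -- `(x, t)` lies in the strict epigraph for every `t > φ x`; let `t` decrease to `φ x`
  have hle : (F (x, 0) - F (x₀, 0)) / (-c) + φ x₀ ≤ φ x := by
    refine le_of_forall_gt_imp_ge_of_dense fun t ht => ?_
    have := hF (x, t) (by simpa using ht)
    rw [hsplit x t, hsplit x₀ (φ x₀)] at this
    rw [div_add' _ _ _ hc.ne', div_le_iff₀ hc]
    nlinarith
  have hg : ((-c)⁻¹ • F.comp (.inl ℝ E ℝ)) (x - x₀) = (F (x, 0) - F (x₀, 0)) / (-c) := by
    rw [div_eq_inv_mul, ← map_sub, Prod.mk_sub_mk, sub_zero]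
    rfl
  linarith

theorem convexOn_finset_sum {𝕜 E β ι : Type*} [Semiring 𝕜] [PartialOrder 𝕜] [AddCommMonoid E]
    [AddCommMonoid β] [PartialOrder β] [IsOrderedAddMonoid β] [SMul 𝕜 E] [Module 𝕜 β]
    {s : Set E} (hs : Convex 𝕜 s) (t : Finset ι) {f : ι → E → β}
    (hf : ∀ i ∈ t, ConvexOn 𝕜 s (f i)) : ConvexOn 𝕜 s fun x => ∑ i ∈ t, f i x := by
  classical
  induction t using Finset.induction_on with
  | empty => simpa using convexOn_const 0 hs
  | insert a t ha ih =>
    simp_rw [sum_insert ha]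
    exact (hf a (mem_insert_self a t)).add (ih fun i hi => hf i (mem_insert_of_mem hi))

section PerturbationDuality

variable {E F : Type*} [AddCommGroup E] [Module ℝ E]

theorem convexOn_ciInf_of_convexOn_prod [AddCommGroup F] [Module ℝ F] {Q : E × F → ℝ}
    (hQ : ConvexOn ℝ univ Q) (hbdd : ∀ u, BddBelow (range fun w => Q (w, u))) :
    ConvexOn ℝ univ fun u => ⨅ w, Q (w, u) := by
  refine ⟨convex_univ, fun u₁ _ u₂ _ a b ha hb hab => ?_⟩
  refine le_of_forall_pos_le_add fun ε hε => ?_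
  obtain ⟨w₁, hw₁⟩ := exists_lt_of_ciInf_lt (lt_add_of_pos_right (⨅ w, Q (w, u₁)) hε)
  obtain ⟨w₂, hw₂⟩ := exists_lt_of_ciInf_lt (lt_add_of_pos_right (⨅ w, Q (w, u₂)) hε)
  calc ⨅ w, Q (w, a • u₁ + b • u₂)
      ≤ Q (a • (w₁, u₁) + b • (w₂, u₂)) := ciInf_le (hbdd _) (a • w₁ + b • w₂)
    _ ≤ a • Q (w₁, u₁) + b • Q (w₂, u₂) := hQ.2 trivial trivial ha hb hab
    _ ≤ a • ((⨅ w, Q (w, u₁)) + ε) + b • ((⨅ w, Q (w, u₂)) + ε) := by gcongr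
    _ = a • (⨅ w, Q (w, u₁)) + b • (⨅ w, Q (w, u₂)) + ε := by
      simp only [smul_eq_mul]
      linear_combination ε * hab

theorem ConvexOn.exists_dual_certificate [NormedAddCommGroup F] [NormedSpace ℝ F]
    [FiniteDimensional ℝ F] {L : F → ℝ} {R : E → ℝ} (hL : ConvexOn ℝ univ L)
    (hR : ConvexOn ℝ univ R) (A : E →ₗ[ℝ] F)
    (hbdd : ∀ u, BddBelow (range fun w => L (A w + u) + R w)) :
    ∃ β : StrongDual ℝ F, ∀ v w, (⨅ w', L (A w') + R w') + β v ≤ L v + (R w + β (A w)) := by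
  have hQ : ConvexOn ℝ univ fun q : E × F => L (A q.1 + q.2) + R q.1 :=
    (hL.comp_linearMap (A.comp (LinearMap.fst ℝ E F) + LinearMap.snd ℝ E F)).add
      (hR.comp_linearMap (LinearMap.fst ℝ E F))
  have hφ : ConvexOn ℝ univ fun u => ⨅ w, L (A w + u) + R w :=
    convexOn_ciInf_of_convexOn_prod hQ hbdd
  obtain ⟨β, hβ⟩ := hφ.exists_subgradient (continuousOn_univ.mp (hφ.continuousOn isOpen_univ)) 0
  refine ⟨β, fun v w => ?_⟩
  have := (hβ (v - A w)).trans (ciInf_le (hbdd (v - A w)) w)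
  simp only [add_zero, sub_zero, map_sub, add_sub_cancel] at this
  linarith

end PerturbationDuality

theorem StrongDual.exists_eq_dotProduct {ι : Type*} [Fintype ι] (m : StrongDual ℝ (ι → ℝ)) :
    ∃ b : ι → ℝ, ∀ v, m v = b ⬝ᵥ v := by
  classical
  exact ⟨(dotProductEquiv ℝ ι).symm m.toLinearMap, fun v => by
    rw [← dotProductEquiv_apply_apply, LinearEquiv.apply_symm_apply]; rfl⟩

theorem EReal.coe_finset_sum {ι : Type*} (s : Finset ι) (g : ι → ℝ) :
    ((∑ i ∈ s, g i : ℝ) : EReal) = ∑ i ∈ s, (g i : EReal) :=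
  map_sum (⟨⟨Real.toEReal, EReal.coe_zero⟩, EReal.coe_add⟩ : ℝ →+ EReal) g s

theorem EReal.coe_ciInf {ι : Sort*} [Nonempty ι] {g : ι → ℝ} (hg : BddBelow (range g)) :
    ((⨅ i, g i : ℝ) : EReal) = ⨅ i, (g i : EReal) :=
  Monotone.map_ciInf_of_continuousAt continuous_coe_real_ereal.continuousAt
    EReal.coe_strictMono.monotone hg

theorem EReal.sum_iSup {ι α : Type*} [Fintype ι] [Nonempty α]
    (g : ι → α → EReal) : ∑ i, ⨆ t, g i t = ⨆ v : ι → α, ∑ i, g i (v i) := by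
  classical
  refine le_antisymm ?_ (iSup_le fun v => sum_le_sum fun i _ => le_iSup (g i) (v i))
  suffices ∀ s : Finset ι, ∑ i ∈ s, ⨆ t, g i t ≤ ⨆ v : ι → α, ∑ i ∈ s, g i (v i) from this _
  intro s
  induction s using Finset.induction_on with
  | empty => simp
  | insert a s ha ih =>
    rw [sum_insert ha]
    refine (add_le_add le_rfl ih).trans (EReal.add_le_of_forall_lt fun x hx y hy => ?_)
    obtain ⟨t, ht⟩ := lt_iSup_iff.mp hx
    obtain ⟨v, hv⟩ := lt_iSup_iff.mp hy
    have hs : ∑ i ∈ s, g i (Function.update v a t i) = ∑ i ∈ s, g i (v i) :=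
      sum_congr rfl fun i hi => by rw [Function.update_of_ne (ne_of_mem_of_not_mem hi ha)]
    refine le_iSup_of_le (Function.update v a t) ?_
    rw [sum_insert ha, Function.update_self, hs]
    exact add_le_add ht.le hv.le

theorem nonneg_of_binary {κ : Type*} {s : κ → ℝ} (hs : ∀ j, s j = 0 ∨ s j = 1) : 0 ≤ s :=
  fun j => by rcases hs j with h | h <;> simp [h]

theorem sum_eq_card_ne_zero_of_binary {κ : Type*} [Fintype κ] {s : κ → ℝ}
    (hs : ∀ j, s j = 0 ∨ s j = 1) [DecidablePred fun j => s j ≠ 0] :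
    ∑ j, s j = #{j | s j ≠ 0} := by
  rw [natCast_card_filter]
  exact sum_congr rfl fun j _ => by rcases hs j with h | h <;> simp [h]

theorem norm0_mul_le_sum_of_binary {p : ℕ} {s : Fin p → ℝ} (hs : ∀ j, s j = 0 ∨ s j = 1)
    (w : Fin p → ℝ) : (norm0 (s * w) : ℝ) ≤ ∑ j, s j := by
  classical
  rw [sum_eq_card_ne_zero_of_binary hs, norm0]
  refine Nat.cast_le.mpr (card_le_card fun j hj => ?_)
  simp only [mem_filter, Pi.mul_apply] at hj ⊢
  exact ⟨hj.1, left_ne_zero_of_mul hj.2⟩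

theorem exists_binary_mul_eq {p : ℕ} (w : Fin p → ℝ) :
    ∃ s : Fin p → ℝ, (∀ j, s j = 0 ∨ s j = 1) ∧ ∑ j, s j = norm0 w ∧ s * w = w := by
  classical
  refine ⟨fun j => if w j = 0 then 0 else 1, fun j => by dsimp only; split_ifs <;> simp, ?_, ?_⟩
  · rw [norm0, natCast_card_filter]
    exact sum_congr rfl fun j _ => by split_ifs <;> simp_all
  · ext j
    by_cases h : w j = 0 <;> simp [h]

theorem iInf_norm0_le_eq_iInf_binary {β : Type*} [CompleteLattice β] {p k : ℕ}
    (P : (Fin p → ℝ) → β) :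
    ⨅ w : {w : Fin p → ℝ // norm0 w ≤ k}, P w.1 =
      ⨅ s : {s : Fin p → ℝ // (∀ j, s j = 0 ∨ s j = 1) ∧ ∑ j, s j ≤ (k : ℝ)}, ⨅ w, P (s.1 * w) := by
  refine le_antisymm (le_iInf fun s => le_iInf fun w => ?_) (le_iInf fun w => ?_)
  · refine iInf_le_of_le ⟨s.1 * w, ?_⟩ le_rfl
    exact_mod_cast (norm0_mul_le_sum_of_binary s.2.1 w).trans s.2.2
  · obtain ⟨s, hs, hsum, hsw⟩ := exists_binary_mul_eq w.1
    refine iInf_le_of_le ⟨s, hs, ?_⟩ (iInf_le_of_le w.1 (by rw [hsw]))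
    rw [hsum]
    exact_mod_cast w.2

noncomputable def fenchelConj (g : ℝ → ℝ) (a : ℝ) : EReal :=
  ⨆ u : ℝ, ((u * a - g u : ℝ) : EReal)

section SparseRegression

variable {ι κ : Type*} [Fintype ι] [Fintype κ]
  (X : Matrix ι κ ℝ) (y : ι → ℝ) (γ : ℝ) (ℓ : ℝ → ℝ → ℝ)

def totalLoss (v : ι → ℝ) : ℝ := ∑ i, ℓ (y i) (v i)

noncomputable def maskedRidge (s w : κ → ℝ) : ℝ := 1 / (2 * γ) * ∑ j, s j * w j ^ 2

noncomputable def sparseObjective (w : κ → ℝ) : ℝ :=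
  totalLoss y ℓ (X *ᵥ w) + 1 / (2 * γ) * ∑ j, w j ^ 2

noncomputable def maskedObjective (s w : κ → ℝ) : ℝ :=
  totalLoss y ℓ (X *ᵥ (s * w)) + maskedRidge γ s w

noncomputable def dualObjective (α : ι → ℝ) (s : κ → ℝ) : EReal :=
  -(∑ i, fenchelConj (ℓ (y i)) (α i)) - ((γ / 2 * ∑ j, s j * (Xᵀ *ᵥ α) j ^ 2 : ℝ) : EReal)

variable {X y γ ℓ}

theorem convexOn_totalLoss (hℓ : ∀ z, ConvexOn ℝ univ (ℓ z)) :
    ConvexOn ℝ univ (totalLoss y ℓ) :=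
  convexOn_finset_sum convex_univ _ fun i _ =>
    (hℓ (y i)).comp_linearMap (LinearMap.proj (R := ℝ) (φ := fun _ : ι => ℝ) i)

theorem convexOn_maskedRidge (hγ : 0 ≤ γ) {s : κ → ℝ} (hs : 0 ≤ s) :
    ConvexOn ℝ univ (maskedRidge γ s) := by
  have hsq : ∀ j, ConvexOn ℝ univ fun w : κ → ℝ => s j • w j ^ 2 := fun j =>
    ((Even.convexOn_pow (𝕜 := ℝ) even_two).comp_linearMap
      (LinearMap.proj (R := ℝ) (φ := fun _ : κ => ℝ) j)).smul (hs j)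
  exact (convexOn_finset_sum convex_univ _ fun j _ => hsq j).smul (by positivity)

theorem sum_fenchelConj (α : ι → ℝ) :
    ∑ i, fenchelConj (ℓ (y i)) (α i) = ⨆ v : ι → ℝ, ((v ⬝ᵥ α - totalLoss y ℓ v : ℝ) : EReal) := by
  simp only [fenchelConj, EReal.sum_iSup, dotProduct, totalLoss, ← sum_sub_distrib,
    EReal.coe_finset_sum]

theorem neg_le_dotProduct_add_maskedRidge (hγ : 0 < γ) {s : κ → ℝ} (hs : 0 ≤ s) (c w : κ → ℝ) :
    -(γ / 2 * ∑ j, s j * c j ^ 2) ≤ (s * w) ⬝ᵥ c + maskedRidge γ s w := by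
  have hsq : (s * w) ⬝ᵥ c + maskedRidge γ s w + γ / 2 * ∑ j, s j * c j ^ 2
      = ∑ j, s j * (w j + γ * c j) ^ 2 / (2 * γ) := by
    simp only [dotProduct, maskedRidge, mul_sum, ← sum_add_distrib, Pi.mul_apply]
    exact sum_congr rfl fun j _ => by field_simp; ring
  have : 0 ≤ ∑ j, s j * (w j + γ * c j) ^ 2 / (2 * γ) :=
    sum_nonneg fun j _ => by have : 0 ≤ s j := hs j; positivity
  linarith

theorem dotProduct_add_maskedRidge_neg_smul (hγ : 0 < γ) (s c : κ → ℝ) :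
    (s * (-γ • c)) ⬝ᵥ c + maskedRidge γ s (-γ • c) = -(γ / 2 * ∑ j, s j * c j ^ 2) := by
  simp only [dotProduct, maskedRidge, mul_sum, ← sum_add_distrib, ← sum_neg_distrib, Pi.mul_apply,
    Pi.smul_apply, smul_eq_mul]
  exact sum_congr rfl fun j _ => by field_simp; ring

theorem dotProduct_mulVec_mul (b : ι → ℝ) (s w : κ → ℝ) :
    b ⬝ᵥ X *ᵥ (s * w) = (s * w) ⬝ᵥ (Xᵀ *ᵥ b) := by
  rw [dotProduct_mulVec, ← mulVec_transpose, dotProduct_comm]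

theorem dualObjective_le (α : ι → ℝ) (s : κ → ℝ) (v : ι → ℝ) :
    dualObjective X y γ ℓ α s ≤
      ((totalLoss y ℓ v - v ⬝ᵥ α - γ / 2 * ∑ j, s j * (Xᵀ *ᵥ α) j ^ 2 : ℝ) : EReal) := by
  have hconj : ((v ⬝ᵥ α - totalLoss y ℓ v : ℝ) : EReal) ≤ ∑ i, fenchelConj (ℓ (y i)) (α i) := by
    rw [sum_fenchelConj]
    exact le_iSup_of_le v le_rfl
  calc dualObjective X y γ ℓ α s
      ≤ -((v ⬝ᵥ α - totalLoss y ℓ v : ℝ) : EReal)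
          - ((γ / 2 * ∑ j, s j * (Xᵀ *ᵥ α) j ^ 2 : ℝ) : EReal) :=
        EReal.sub_le_sub (EReal.neg_le_neg_iff.mpr hconj) le_rfl
    _ = _ := by norm_cast; ring_nf

theorem le_dualObjective {α : ι → ℝ} {s : κ → ℝ} {r : ℝ}
    (h : ∀ v, r + v ⬝ᵥ α ≤ totalLoss y ℓ v - γ / 2 * ∑ j, s j * (Xᵀ *ᵥ α) j ^ 2) :
    (r : EReal) ≤ dualObjective X y γ ℓ α s := by
  have hconj : ∑ i, fenchelConj (ℓ (y i)) (α i) ≤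
      ((-r - γ / 2 * ∑ j, s j * (Xᵀ *ᵥ α) j ^ 2 : ℝ) : EReal) := by
    rw [sum_fenchelConj]
    exact iSup_le fun v => EReal.coe_le_coe_iff.mpr (by linarith [h v])
  calc (r : EReal)
      = -((-r - γ / 2 * ∑ j, s j * (Xᵀ *ᵥ α) j ^ 2 : ℝ) : EReal)
          - ((γ / 2 * ∑ j, s j * (Xᵀ *ᵥ α) j ^ 2 : ℝ) : EReal) := by norm_cast; ring_nf
    _ ≤ dualObjective X y γ ℓ α s := EReal.sub_le_sub (EReal.neg_le_neg_iff.mpr hconj) le_rfl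

theorem dualObjective_le_maskedObjective (hγ : 0 < γ) {s : κ → ℝ} (hs : 0 ≤ s) (α : ι → ℝ)
    (w : κ → ℝ) : dualObjective X y γ ℓ α s ≤ maskedObjective X y γ ℓ s w := by
  refine (dualObjective_le α s (X *ᵥ (s * w))).trans (EReal.coe_le_coe_iff.mpr ?_)
  have := neg_le_dotProduct_add_maskedRidge hγ hs (Xᵀ *ᵥ α) w
  rw [dotProduct_comm, dotProduct_mulVec_mul, maskedObjective]
  linarith

theorem bddBelow_range_totalLoss_add_maskedRidge (hγ : 0 < γ)
    (hℓ : ∀ z, ConvexOn ℝ univ (ℓ z)) {s : κ → ℝ} (hs : 0 ≤ s) (u : ι → ℝ) :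
    BddBelow (range fun w => totalLoss y ℓ (X *ᵥ (s * w) + u) + maskedRidge γ s w) := by
  have hL := convexOn_totalLoss (y := y) hℓ
  obtain ⟨m, hm⟩ := hL.exists_subgradient (continuousOn_univ.mp (hL.continuousOn isOpen_univ)) 0
  obtain ⟨b, hb⟩ := m.exists_eq_dotProduct
  refine ⟨totalLoss y ℓ 0 + b ⬝ᵥ u - γ / 2 * ∑ j, s j * (Xᵀ *ᵥ b) j ^ 2, ?_⟩
  rintro _ ⟨w, rfl⟩
  have hloss := hm (X *ᵥ (s * w) + u)
  have hquad := neg_le_dotProduct_add_maskedRidge hγ hs (Xᵀ *ᵥ b) w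
  rw [sub_zero, hb, dotProduct_add, dotProduct_mulVec_mul] at hloss
  linarith

theorem exists_maskedObjective_le_dualObjective (hγ : 0 < γ) (hℓ : ∀ z, ConvexOn ℝ univ (ℓ z))
    {s : κ → ℝ} (hs : 0 ≤ s) :
    ∃ α, ⨅ w, (maskedObjective X y γ ℓ s w : EReal) ≤ dualObjective X y γ ℓ α s := by
  set A : (κ → ℝ) →ₗ[ℝ] (ι → ℝ) := X.mulVecLin ∘ₗ LinearMap.mulLeft ℝ s
  have hA : ∀ w, A w = X *ᵥ (s * w) := fun w => rfl
  have hbdd := bddBelow_range_totalLoss_add_maskedRidge (X := X) (y := y) hγ hℓ hs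
  obtain ⟨β, hβ⟩ := (convexOn_totalLoss hℓ).exists_dual_certificate
    (convexOn_maskedRidge hγ.le hs) A hbdd
  obtain ⟨b, hb⟩ := β.exists_eq_dotProduct
  have hbdd₀ : BddBelow (range fun w => totalLoss y ℓ (A w) + maskedRidge γ s w) := by
    have h := hbdd 0
    simp only [add_zero] at h
    exact h
  refine ⟨b, (EReal.coe_ciInf hbdd₀).symm.trans_le (le_dualObjective fun v => ?_)⟩
  have hcert := hβ v (-γ • (Xᵀ *ᵥ b))
  have hmin := dotProduct_add_maskedRidge_neg_smul hγ s (Xᵀ *ᵥ b)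
  rw [hb, hb, hA, dotProduct_mulVec_mul] at hcert
  rw [dotProduct_comm]
  linarith

theorem maskedObjective_eq_sparseObjective_of_binary {s : κ → ℝ} (hs : ∀ j, s j = 0 ∨ s j = 1)
    (w : κ → ℝ) : maskedObjective X y γ ℓ s w = sparseObjective X y γ ℓ (s * w) := by
  rw [maskedObjective, sparseObjective, maskedRidge]
  congr 2
  exact sum_congr rfl fun j _ => by rcases hs j with h | h <;> simp [h]

theorem iInf_maskedObjective_eq_iSup_dualObjective (hγ : 0 < γ)
    (hℓ : ∀ z, ConvexOn ℝ univ (ℓ z)) {s : κ → ℝ} (hs : 0 ≤ s) :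
    ⨅ w, (maskedObjective X y γ ℓ s w : EReal) = ⨆ α, dualObjective X y γ ℓ α s := by
  refine le_antisymm ?_
    (iSup_le fun α => le_iInf fun w => dualObjective_le_maskedObjective hγ hs α w)
  obtain ⟨α, hα⟩ := exists_maskedObjective_le_dualObjective (X := X) (y := y) hγ hℓ hs
  exact hα.trans (le_iSup (dualObjective X y γ ℓ · s) α)

end SparseRegression

theorem sparse_regression_cio_equiv_general
    {n p k : ℕ}
    (X : Matrix (Fin n) (Fin p) ℝ) (y : Fin n → ℝ)
    (γ : ℝ) (hγ : 0 < γ)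
    (ℓ : ℝ → ℝ → ℝ) (hconv : ∀ z : ℝ, ConvexOn ℝ Set.univ (ℓ z))
    (lhat : ℝ → ℝ → EReal)
    (hlhat : ∀ z a : ℝ, lhat z a = ⨆ u : ℝ, ((u * a - ℓ z u : ℝ) : EReal))
    (f : (Fin n → ℝ) → (Fin p → ℝ) → EReal)
    (hf : ∀ α s, f α s =
      -(∑ i, lhat (y i) (α i))
        - ((γ / 2 * ∑ j, s j * (∑ i, X i j * α i) ^ 2 : ℝ) : EReal)) :
    (⨅ w : {w : Fin p → ℝ // norm0 w ≤ k},
        ((∑ i, ℓ (y i) (∑ j, X i j * w.1 j)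
            + 1 / (2 * γ) * ∑ j, (w.1 j) ^ 2 : ℝ) : EReal))
      =
    (⨅ s : {s : Fin p → ℝ // (∀ j, s j = 0 ∨ s j = 1) ∧ ∑ j, s j ≤ (k : ℝ)},
        ⨆ α : Fin n → ℝ, f α s.1) := by
  obtain rfl : lhat = fun z => fenchelConj (ℓ z) := funext fun z => funext (hlhat z)
  obtain rfl : f = dualObjective X y γ ℓ := funext fun α => funext (hf α)
  refine (iInf_norm0_le_eq_iInf_binary fun w => (sparseObjective X y γ ℓ w : EReal)).trans
    (iInf_congr fun s => ?_)
  rw [← iInf_maskedObjective_eq_iSup_dualObjective hγ hconv (nonneg_of_binary s.2.1)]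
  simp only [maskedObjective_eq_sparseObjective_of_binary s.2.1]

/-- The ℓ₂-regularized cardinality-constrained problem has the same optimal value
as the convex integer min-max problem. -/
theorem sparse_regression_cio_equiv
    {n p k : ℕ} (hk1 : 1 ≤ k) (hkp : k ≤ p)
    (X : Matrix (Fin n) (Fin p) ℝ) (y : Fin n → ℝ)
    (γ : ℝ) (hγ : 0 < γ)
    (ℓ : ℝ → ℝ → ℝ) (hconv : ∀ z : ℝ, ConvexOn ℝ Set.univ (ℓ z))
    (lhat : ℝ → ℝ → EReal)
    (hlhat : ∀ z a : ℝ, lhat z a = ⨆ u : ℝ, ((u * a - ℓ z u : ℝ) : EReal))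
    (f : (Fin n → ℝ) → (Fin p → ℝ) → EReal)
    (hf : ∀ α s, f α s =
      -(∑ i, lhat (y i) (α i))
        - ((γ / 2 * ∑ j, s j * (∑ i, X i j * α i) ^ 2 : ℝ) : EReal)) :
    (⨅ w : {w : Fin p → ℝ // norm0 w ≤ k},
        ((∑ i, ℓ (y i) (∑ j, X i j * w.1 j)
            + 1 / (2 * γ) * ∑ j, (w.1 j) ^ 2 : ℝ) : EReal))
      =
    (⨅ s : {s : Fin p → ℝ // (∀ j, s j = 0 ∨ s j = 1) ∧ ∑ j, s j ≤ (k : ℝ)},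
        ⨆ α : Fin n → ℝ, f α s.1) :=
  sparse_regression_cio_equiv_general X y γ hγ ℓ hconv lhat hlhat f hf
end

section
/- Let K ⊆ ℝ^n be a nonempty closed convex set and P: ℝ^n → K the metric projection onto K (i.e., P x ∈ K and ‖x − P x‖ ≤ ‖x − z‖ for every z ∈ K). Let S be a nonempty finite set and f: ℝ^n × S → ℝ be such that f(·,s) is concave and differentiable on ℝ^n for each s ∈ S; write φ(α) := min_{s∈S} f(α,s). Assume the set Ā of maximizers of φ over K is nonempty, with optimal value f* = max_{α∈K} φ(α). Fix δ > 0 and L > 0, and let (α^t)_{t≥0} ⊆ K and (s^t)_{t≥0} ⊆ S be sequences with s^t ∈ argmin_{s∈S} f(α^t, s), α^{t+1} = P(α^t + δ ∇_α f(α^t, s^t)), and ‖∇_α f(α^t, s^t)‖ ≤ L for all t. Then for every T ≥ 1, setting α̂_T := (1/T) Σ_{t=0}^{T−1} α^t and choosing any ŝ ∈ argmin_{s∈S} f(α̂_T, s), one has f(α̂_T, ŝ) ≥ f* − δL²/2 − dist(α^0, Ā)²/(2δT), where dist(α^0, Ā) := inf_{ᾱ∈Ā} ‖α^0 − ᾱ‖.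 -/
/-!
Concavity of `f(·, s)` bounds `⟪∇ₐ f(αᵗ, sᵗ), αᵗ - b⟫` by `f(αᵗ, sᵗ) - f(b, sᵗ) ≤ φ(αᵗ) - f*`
for every maximizer `b`, and the projection onto `K` does not increase the distance to `b`.
Hence `‖αᵗ⁺¹ - b‖² ≤ ‖αᵗ - b‖² - 2δ (f* - φ(αᵗ)) + δ² L²`. Summing over `t < T`, bounding
`φ(αᵗ) ≤ f(αᵗ, ŝ)` and applying Jensen's inequality to the concave `f(·, ŝ)` gives the bound
with `‖α⁰ - b‖` in place of `dist(α⁰, Ā)`, and then one takes the infimum over `b`.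
-/

open Set Metric Finset
open scoped RealInnerProductSpace Gradient

theorem ConcaveOn.le_add_of_hasFDerivAt {E : Type*} [NormedAddCommGroup E] [NormedSpace ℝ E]
    {s : Set E} {g : E → ℝ} {g' : E →L[ℝ] ℝ} {x y : E} (hg : ConcaveOn ℝ s g)
    (hx : x ∈ s) (hy : y ∈ s) (hd : HasFDerivAt g g' x) :
    g y ≤ g x + g' (y - x) := by
  let ℓ : ℝ →ᵃ[ℝ] E := AffineMap.lineMap x y
  have hℓ : ∀ τ : ℝ, ℓ τ = τ • (y - x) + x := fun τ => by
    simp [ℓ, AffineMap.lineMap_apply]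
  have hgℓ : ConcaveOn ℝ (ℓ ⁻¹' s) (g ∘ ℓ) := hg.comp_affineMap ℓ
  have hℓd : HasDerivAt ℓ (y - x) 0 := by
    rw [show (ℓ : ℝ → E) = fun τ => τ • (y - x) + x from funext hℓ]
    simpa using ((hasDerivAt_id (0 : ℝ)).smul_const (y - x)).add_const x
  have hgℓd : HasDerivAt (g ∘ ℓ) (g' (y - x)) 0 :=
    (by simpa [hℓ] using hd : HasFDerivAt g g' (ℓ 0)).comp_hasDerivAt 0 hℓd
  have hslope := hgℓ.slope_le_of_hasDerivAt (by simpa [hℓ] using hx) (by simpa [hℓ] using hy)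
    one_pos hgℓd
  simp only [slope_def_field, Function.comp, hℓ, zero_smul, zero_add, one_smul,
    sub_add_cancel, sub_zero, div_one] at hslope
  linarith

theorem ConcaveOn.le_add_inner_gradient {E : Type*} [NormedAddCommGroup E]
    [InnerProductSpace ℝ E] [CompleteSpace E] {s : Set E} {g : E → ℝ} {x y : E}
    (hg : ConcaveOn ℝ s g) (hx : x ∈ s) (hy : y ∈ s) (hd : DifferentiableAt ℝ g x) :
    g y ≤ g x + ⟪∇ g x, y - x⟫ := by
  simpa [InnerProductSpace.toDual_apply_apply] using
    hg.le_add_of_hasFDerivAt hx hy hd.hasGradientAt.hasFDerivAt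

theorem ConcaveOn.inv_card_mul_sum_le_map_average {E ι : Type*} [AddCommGroup E] [Module ℝ E]
    {s : Set E} {g : E → ℝ} {t : Finset ι} {p : ι → E} (hg : ConcaveOn ℝ s g)
    (ht : t.Nonempty) (hp : ∀ i ∈ t, p i ∈ s) :
    (#t : ℝ)⁻¹ * ∑ i ∈ t, g (p i) ≤ g ((#t : ℝ)⁻¹ • ∑ i ∈ t, p i) := by
  have hw : ∑ _i ∈ t, (#t : ℝ)⁻¹ = 1 := by
    rw [sum_const, nsmul_eq_mul, mul_inv_cancel₀ (by exact_mod_cast ht.card_ne_zero)]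
  simpa [mul_sum, smul_sum] using hg.le_map_sum (fun _ _ => by positivity) hw hp

theorem le_infDist_sq_of_forall_le_dist_sq {X : Type*} [PseudoMetricSpace X] {A : Set X}
    {x : X} {m : ℝ} (hA : A.Nonempty) (h : ∀ b ∈ A, m ≤ dist x b ^ 2) :
    m ≤ infDist x A ^ 2 :=
  (Real.sqrt_le_iff.mp <| (le_infDist hA).mpr fun b hb =>
    Real.sqrt_le_iff.mpr ⟨dist_nonneg, h b hb⟩).2

section ProjectedGradient

variable {E : Type*} [NormedAddCommGroup E] [InnerProductSpace ℝ E]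

def IsMetricProjection (K : Set E) (P : E → E) : Prop :=
  ∀ x, P x ∈ K ∧ ∀ z ∈ K, ‖x - P x‖ ≤ ‖x - z‖

variable {K : Set E} {P : E → E}

theorem IsMetricProjection.norm_sub_le (hP : IsMetricProjection K P) (hK : Convex ℝ K)
    (x : E) {z : E} (hz : z ∈ K) : ‖P x - z‖ ≤ ‖x - z‖ := by
  obtain ⟨hPx, hmin⟩ := hP x
  have : Nonempty K := ⟨⟨z, hz⟩⟩
  have hinf : ‖x - P x‖ = ⨅ w : K, ‖x - w‖ :=
    le_antisymm (le_ciInf fun w => hmin w w.2)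
      (ciInf_le (⟨0, by rintro _ ⟨w, rfl⟩; exact norm_nonneg _⟩ :
        BddBelow (range fun w : K => ‖x - w‖)) ⟨P x, hPx⟩)
  have hobtuse : ⟪x - P x, z - P x⟫ ≤ 0 :=
    (norm_eq_iInf_iff_real_inner_le_zero hK hPx).mp hinf z hz
  have hsq : ‖x - z‖ ^ 2 = ‖x - P x‖ ^ 2 - 2 * ⟪x - P x, z - P x⟫ + ‖P x - z‖ ^ 2 := by
    rw [show x - z = (x - P x) + (P x - z) by abel, norm_add_sq_real,
      show P x - z = -(z - P x) by abel, inner_neg_right, norm_neg]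
    ring
  refine pow_le_pow_iff_left₀ (norm_nonneg _) (norm_nonneg _) two_ne_zero |>.mp ?_
  nlinarith [sq_nonneg ‖x - P x‖]

variable [CompleteSpace E]

theorem IsMetricProjection.norm_gradient_step_sub_sq_le (hP : IsMetricProjection K P)
    (hK : Convex ℝ K) {g : E → ℝ} (hg : ConcaveOn ℝ K g) {x b : E} (hx : x ∈ K) (hb : b ∈ K)
    (hd : DifferentiableAt ℝ g x) {δ : ℝ} (hδ : 0 ≤ δ) :
    ‖P (x + δ • ∇ g x) - b‖ ^ 2 ≤ ‖x - b‖ ^ 2 - 2 * δ * (g b - g x) + δ ^ 2 * ‖∇ g x‖ ^ 2 := by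
  have hinner : ⟪∇ g x, x - b⟫ ≤ g x - g b := by
    have := hg.le_add_inner_gradient hx hb hd
    rw [show b - x = -(x - b) by abel, inner_neg_right] at this
    linarith
  calc ‖P (x + δ • ∇ g x) - b‖ ^ 2 ≤ ‖x + δ • ∇ g x - b‖ ^ 2 := by
        gcongr; exact hP.norm_sub_le hK _ hb
    _ = ‖x - b‖ ^ 2 + 2 * δ * ⟪∇ g x, x - b⟫ + δ ^ 2 * ‖∇ g x‖ ^ 2 := by
        rw [show x + δ • ∇ g x - b = (x - b) + δ • ∇ g x by abel, norm_add_sq_real,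
          real_inner_smul_right, real_inner_comm, norm_smul, Real.norm_eq_abs, mul_pow, sq_abs]
        ring
    _ ≤ ‖x - b‖ ^ 2 - 2 * δ * (g b - g x) + δ ^ 2 * ‖∇ g x‖ ^ 2 := by
        linarith [mul_le_mul_of_nonneg_left hinner hδ]

theorem IsMetricProjection.gradientAscent_regret_le (hP : IsMetricProjection K P)
    (hK : Convex ℝ K) {g : ℕ → E → ℝ} {x : ℕ → E} {δ L : ℝ} {b : E} (hg : ∀ t, ConcaveOn ℝ K (g t))
    (hd : ∀ t, DifferentiableAt ℝ (g t) (x t)) (hδ : 0 ≤ δ)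
    (hx0 : x 0 ∈ K) (hx : ∀ t, x (t + 1) = P (x t + δ • ∇ (g t) (x t)))
    (hL : ∀ t, ‖∇ (g t) (x t)‖ ≤ L) (hb : b ∈ K) (T : ℕ) :
    2 * δ * ∑ t ∈ range T, (g t b - g t (x t)) ≤ ‖x 0 - b‖ ^ 2 + T * (δ * L) ^ 2 := by
  have hxK : ∀ t, x t ∈ K
    | 0 => hx0
    | t + 1 => hx t ▸ (hP _).1
  have hstep : ∀ t, ‖x (t + 1) - b‖ ^ 2 - ‖x t - b‖ ^ 2 ≤
      (δ * L) ^ 2 - 2 * δ * (g t b - g t (x t)) := fun t => by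
    have hproj := hx t ▸ hP.norm_gradient_step_sub_sq_le hK (hg t) (hxK t) hb (hd t) hδ
    have hgrad : ‖∇ (g t) (x t)‖ ^ 2 ≤ L ^ 2 := pow_le_pow_left₀ (norm_nonneg _) (hL t) 2
    nlinarith
  have htel := (sum_range_sub (fun t => ‖x t - b‖ ^ 2) T).symm.trans_le
    (sum_le_sum fun t _ => hstep t)
  rw [sum_sub_distrib, sum_const, card_range, nsmul_eq_mul, ← mul_sum] at htel
  linarith [sq_nonneg ‖x T - b‖]

end ProjectedGradient

theorem dual_subgradient_convergence_general
    {n : ℕ} {S : Type*} [Fintype S]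
    (K : Set (EuclideanSpace ℝ (Fin n)))
    (hKconv : Convex ℝ K)
    (P : EuclideanSpace ℝ (Fin n) → EuclideanSpace ℝ (Fin n))
    (hP : ∀ x, P x ∈ K ∧ ∀ z ∈ K, ‖x - P x‖ ≤ ‖x - z‖)
    (f : EuclideanSpace ℝ (Fin n) → S → ℝ)
    (hconc : ∀ s : S, ConcaveOn ℝ Set.univ (fun a => f a s))
    (hdiff : ∀ s : S, Differentiable ℝ (fun a => f a s))
    (Abar : Set (EuclideanSpace ℝ (Fin n)))
    (hAbar : Abar = {a | a ∈ K ∧ ∀ α ∈ K, (⨅ s : S, f α s) ≤ ⨅ s : S, f a s})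
    (hAne : Abar.Nonempty)
    (fstar : ℝ) (hfstar : ∀ a ∈ Abar, (⨅ s : S, f a s) = fstar)
    (δ L : ℝ) (hδ : 0 < δ)
    (α : ℕ → EuclideanSpace ℝ (Fin n)) (seq : ℕ → S)
    (hαK : ∀ t, α t ∈ K)
    (hargmin : ∀ (t : ℕ) (s : S), f (α t) (seq t) ≤ f (α t) s)
    (hupdate : ∀ t : ℕ,
      α (t + 1) = P (α t + δ • gradient (fun a => f a (seq t)) (α t)))
    (hbound : ∀ t : ℕ, ‖gradient (fun a => f a (seq t)) (α t)‖ ≤ L)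
    (T : ℕ) (hT : 1 ≤ T)
    (αhat : EuclideanSpace ℝ (Fin n))
    (hαhat : αhat = (T : ℝ)⁻¹ • ∑ t ∈ Finset.range T, α t)
    (shat : S) :
    f αhat shat ≥
      fstar - δ * L ^ 2 / 2 - (Metric.infDist (α 0) Abar) ^ 2 / (2 * δ * T) := by
  have hT0 : (0 : ℝ) < T := by exact_mod_cast hT
  have hKf : ∀ s, ConcaveOn ℝ K (fun a => f a s) := fun s =>
    (hconc s).subset (subset_univ K) hKconv
  have hregret : ∀ b ∈ Abar,
      2 * δ * ∑ t ∈ range T, (fstar - f (α t) (seq t)) ≤ ‖α 0 - b‖ ^ 2 + T * (δ * L) ^ 2 := by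
    intro b hb
    refine le_trans ?_ (IsMetricProjection.gradientAscent_regret_le hP hKconv
      (fun t => hKf (seq t)) (fun t => hdiff _ _) hδ.le (hαK 0) hupdate hbound (hAbar ▸ hb).1 T)
    gcongr with t
    exact hfstar b hb ▸ ciInf_le (finite_range _).bddBelow _
  have havg : ∑ t ∈ range T, f (α t) (seq t) ≤ T * f αhat shat := by
    refine (inv_mul_le_iff₀ hT0).mp ?_
    have hJensen := (hconc shat).inv_card_mul_sum_le_map_average (t := range T) (p := α)
      (nonempty_range_iff.mpr (by omega)) (fun t _ => mem_univ _)
    rw [card_range, ← hαhat] at hJensen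
    refine le_trans ?_ hJensen
    gcongr with t
    exact hargmin t shat
  have hdist : 2 * δ * T * (fstar - f αhat shat) - T * (δ * L) ^ 2 ≤ infDist (α 0) Abar ^ 2 :=
    le_infDist_sq_of_forall_le_dist_sq hAne fun b hb => by
      have hregret_b := hregret b hb
      rw [sum_sub_distrib, sum_const, card_range, nsmul_eq_mul] at hregret_b
      rw [dist_eq_norm]
      linarith [mul_le_mul_of_nonneg_left havg (by positivity : (0 : ℝ) ≤ 2 * δ)]
  have hscaled := div_le_div_of_nonneg_right hdist (by positivity : (0 : ℝ) ≤ 2 * δ * T)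
  rw [show (2 * δ * T * (fstar - f αhat shat) - T * (δ * L) ^ 2) / (2 * δ * T)
      = fstar - f αhat shat - δ * L ^ 2 / 2 by field_simp] at hscaled
  linarith

/-- Convergence guarantee for the dual projected sub-gradient algorithm with constant
step size `δ` applied to `max_{α ∈ K} min_{s ∈ S} f(α, s)`. -/
theorem dual_subgradient_convergence
    {n : ℕ} {S : Type*} [Fintype S] [Nonempty S]
    (K : Set (EuclideanSpace ℝ (Fin n)))
    (hKne : K.Nonempty) (hKcl : IsClosed K) (hKconv : Convex ℝ K)
    (P : EuclideanSpace ℝ (Fin n) → EuclideanSpace ℝ (Fin n))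
    (hP : ∀ x, P x ∈ K ∧ ∀ z ∈ K, ‖x - P x‖ ≤ ‖x - z‖)
    (f : EuclideanSpace ℝ (Fin n) → S → ℝ)
    (hconc : ∀ s : S, ConcaveOn ℝ Set.univ (fun a => f a s))
    (hdiff : ∀ s : S, Differentiable ℝ (fun a => f a s))
    (Abar : Set (EuclideanSpace ℝ (Fin n)))
    (hAbar : Abar = {a | a ∈ K ∧ ∀ α ∈ K, (⨅ s : S, f α s) ≤ ⨅ s : S, f a s})
    (hAne : Abar.Nonempty)
    (fstar : ℝ) (hfstar : ∀ a ∈ Abar, (⨅ s : S, f a s) = fstar)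
    (δ L : ℝ) (hδ : 0 < δ) (hL : 0 < L)
    (α : ℕ → EuclideanSpace ℝ (Fin n)) (seq : ℕ → S)
    (hαK : ∀ t, α t ∈ K)
    (hargmin : ∀ (t : ℕ) (s : S), f (α t) (seq t) ≤ f (α t) s)
    (hupdate : ∀ t : ℕ,
      α (t + 1) = P (α t + δ • gradient (fun a => f a (seq t)) (α t)))
    (hbound : ∀ t : ℕ, ‖gradient (fun a => f a (seq t)) (α t)‖ ≤ L)
    (T : ℕ) (hT : 1 ≤ T)
    (αhat : EuclideanSpace ℝ (Fin n))
    (hαhat : αhat = (T : ℝ)⁻¹ • ∑ t ∈ Finset.range T, α t)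
    (shat : S) (hshat : ∀ s : S, f αhat shat ≤ f αhat s) :
    f αhat shat ≥
      fstar - δ * L ^ 2 / 2 - (Metric.infDist (α 0) Abar) ^ 2 / (2 * δ * T) :=
  dual_subgradient_convergence_general K hKconv P hP f hconc hdiff Abar hAbar hAne fstar hfstar δ L
    hδ α seq hαK hargmin hupdate hbound T hT αhat hαhat shat
end

section
/- Let ℓ: ℝ × ℝ → ℝ be a loss function such that ℓ(y,·) is convex for every y, and let S_k := {s ∈ [0,1]^p : Σ_j s_j ≤ k} for 1 ≤ k ≤ p. Then the minimax equality holds: inf_{s ∈ S_k} sup_{α ∈ ℝ^n} f(α,s) = sup_{α ∈ ℝ^n} inf_{s ∈ S_k} f(α,s) (equality of values in the extended reals), i.e., minimization and maximization in the Boolean relaxation can be interchanged. -/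
open scoped BigOperators

private lemma ereal_sum_ne_bot {ι : Type*} (t : Finset ι) (g : ι → EReal)
    (h : ∀ i ∈ t, g i ≠ ⊥) : ∑ i ∈ t, g i ≠ ⊥ := by
  classical
  induction t using Finset.cons_induction with
  | empty => simp
  | cons a t ha ih =>
    rw [Finset.sum_cons]
    intro hc
    rcases EReal.add_eq_bot_iff.1 hc with h1 | h1
    · exact h a (Finset.mem_cons_self a t) h1
    · exact ih (fun i hi => h i (Finset.mem_cons_of_mem hi)) h1

private lemma ereal_coe_sum {ι : Type*} (t : Finset ι) (g : ι → ℝ) :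
    ((∑ i ∈ t, g i : ℝ) : EReal) = ∑ i ∈ t, (g i : EReal) := by
  classical
  induction t using Finset.cons_induction with
  | empty => simp
  | cons a t ha ih => rw [Finset.sum_cons, Finset.sum_cons, EReal.coe_add, ih]

private lemma ereal_term_ne_top {ι : Type*} (t : Finset ι) (g : ι → EReal)
    (hb : ∀ i ∈ t, g i ≠ ⊥) (hs : ∑ i ∈ t, g i ≠ ⊤) : ∀ i ∈ t, g i ≠ ⊤ := by
  classical
  intro i hi htop
  apply hs
  rw [← Finset.add_sum_erase t g hi, htop]
  exact EReal.top_add_of_ne_bot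
    (ereal_sum_ne_bot _ _ fun j hj => hb j (Finset.mem_of_mem_erase hj))

private lemma ereal_toReal_sum {ι : Type*} (t : Finset ι) (g : ι → EReal)
    (hb : ∀ i ∈ t, g i ≠ ⊥) (ht : ∀ i ∈ t, g i ≠ ⊤) :
    (∑ i ∈ t, g i).toReal = ∑ i ∈ t, (g i).toReal := by
  have h1 : ∑ i ∈ t, g i = ((∑ i ∈ t, (g i).toReal : ℝ) : EReal) := by
    rw [ereal_coe_sum]
    exact Finset.sum_congr rfl fun i hi => (EReal.coe_toReal (ht i hi) (hb i hi)).symm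
  rw [h1, EReal.toReal_coe]

private lemma sep_lemma {q : ℕ} {ι : Type*} [Fintype ι]
    {S : Set (Fin q → ℝ)} (hSc : IsCompact S) (hSconv : Convex ℝ S) (hSne : S.Nonempty)
    (g : ι → (Fin q → ℝ) → ℝ)
    (hgc : ∀ i, Continuous (g i))
    (hgaff : ∀ (i : ι) (a b : ℝ) (s t : Fin q → ℝ), a + b = 1 →
      g i (a • s + b • t) = a * g i s + b * g i t)
    (c : ℝ)
    (hno : ¬ ∃ s ∈ S, ∀ i, g i s ≤ c) :
    ∃ μ : ι → ℝ, (∀ i, 0 ≤ μ i) ∧ ∑ i, μ i = 1 ∧ ∀ s ∈ S, c < ∑ i, μ i * g i s := by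
  classical
  set φ : (Fin q → ℝ) → (ι → ℝ) := fun s i => g i s with hφ
  have himgc : IsCompact (φ '' S) := hSc.image (continuous_pi hgc)
  have himgconv : Convex ℝ (φ '' S) := by
    rintro x ⟨s, hs, rfl⟩ y ⟨t, ht, rfl⟩ a b ha hb hab
    refine ⟨a • s + b • t, hSconv hs ht ha hb hab, ?_⟩
    funext i
    simp only [hφ, Pi.add_apply, Pi.smul_apply, smul_eq_mul]
    exact hgaff i a b s t hab
  set Q : Set (ι → ℝ) := {x | ∀ i, x i ≤ c} with hQ
  have hQeq : Q = ⋂ i, {x : ι → ℝ | x i ≤ c} := by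
    ext x; simp [hQ, Set.mem_iInter]
  have hQclosed : IsClosed Q := by
    rw [hQeq]
    exact isClosed_iInter fun i => isClosed_le (continuous_apply i) continuous_const
  have hQconv : Convex ℝ Q := by
    rw [hQeq]
    exact convex_iInter fun i => convex_halfSpace_le ⟨fun _ _ => rfl, fun _ _ => rfl⟩ c
  have hdisj : Disjoint (φ '' S) Q := by
    rw [Set.disjoint_left]
    rintro x ⟨s, hs, rfl⟩ hxQ
    exact hno ⟨s, hs, fun i => hxQ i⟩
  obtain ⟨F, u, v, hFu, huv, hvF⟩ :=
    geometric_hahn_banach_compact_closed himgconv himgc hQconv hQclosed hdisj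
  have hFrepr : ∀ x : ι → ℝ, F x = ∑ i, x i * F (Pi.single i 1) := by
    intro x
    conv_lhs => rw [← Finset.univ_sum_single x]
    rw [map_sum]
    refine Finset.sum_congr rfl fun i _ => ?_
    have h1 : Pi.single i (x i) = x i • (Pi.single i 1 : ι → ℝ) := by
      funext j
      by_cases h : j = i
      · subst h; simp
      · simp [Pi.single_eq_of_ne h]
    rw [h1, map_smul, smul_eq_mul]
  have hcQ : (fun _ => c : ι → ℝ) ∈ Q := fun i => le_refl c
  have hvc : v < F (fun _ => c) := hvF _ hcQ
  have hlam0 : ∀ i, F (Pi.single i 1) ≤ 0 := by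
    intro i
    by_contra hpos
    push_neg at hpos
    set t0 : ℝ := (F (fun _ => c) - v) / F (Pi.single i 1) + 1 with ht0
    have ht0pos : 0 < t0 := by
      have := div_pos (by linarith : (0:ℝ) < F (fun _ => c) - v) hpos
      rw [ht0]; linarith
    have hmem : (fun j => c - t0 * (Pi.single i (1:ℝ) : ι → ℝ) j : ι → ℝ) ∈ Q := by
      simp only [hQ, Set.mem_setOf_eq]
      intro j
      by_cases h : j = i
      · subst h; simp only [Pi.single_eq_same, mul_one]; linarith
      · simp [Pi.single_eq_of_ne h]
    have h2 := hvF _ hmem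
    have hfe : (fun j => c - t0 * (Pi.single i (1:ℝ) : ι → ℝ) j : ι → ℝ)
        = (fun _ => c : ι → ℝ) - t0 • (Pi.single i 1 : ι → ℝ) := by
      funext j
      simp [smul_eq_mul]
    rw [hfe, map_sub, map_smul, smul_eq_mul] at h2
    have h3 : t0 * F (Pi.single i 1) = (F (fun _ => c) - v) + F (Pi.single i 1) := by
      rw [ht0, add_mul, div_mul_cancel₀ _ (ne_of_gt hpos), one_mul]
    linarith
  set lam : ι → ℝ := fun i => -(F (Pi.single i 1)) with hlam
  have hlamnn : ∀ i, 0 ≤ lam i := fun i => by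
    simp only [hlam]; linarith [hlam0 i]
  set Λ : ℝ := ∑ i, lam i with hΛ
  have hΛnn : 0 ≤ Λ := Finset.sum_nonneg fun i _ => hlamnn i
  have hFeq : ∀ x : ι → ℝ, F x = -(∑ i, x i * lam i) := by
    intro x
    rw [hFrepr x, ← Finset.sum_neg_distrib]
    exact Finset.sum_congr rfl fun i _ => by simp only [hlam]; ring
  have hΛpos : 0 < Λ := by
    rcases hΛnn.lt_or_eq with h | h
    · exact h
    · exfalso
      have hall : ∀ i ∈ Finset.univ, lam i = 0 :=
        (Finset.sum_eq_zero_iff_of_nonneg fun i _ => hlamnn i).1 h.symm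
      obtain ⟨s0, hs0⟩ := hSne
      have h1 := hFu (φ s0) ⟨s0, hs0, rfl⟩
      have h2 := hvc
      rw [hFeq] at h1 h2
      have e1 : ∑ i, (φ s0) i * lam i = 0 :=
        Finset.sum_eq_zero fun i hi => by rw [hall i hi, mul_zero]
      have e2 : ∑ i, (fun _ => c : ι → ℝ) i * lam i = 0 :=
        Finset.sum_eq_zero fun i hi => by rw [hall i hi, mul_zero]
      rw [e1] at h1; rw [e2] at h2
      linarith
  have hkey : ∀ s ∈ S, c * Λ < ∑ i, lam i * g i s := by
    intro s hs
    have h1 := hFu (φ s) ⟨s, hs, rfl⟩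
    have h2 := hvF _ hcQ
    rw [hFeq] at h1 h2
    have e1 : ∑ i, (φ s) i * lam i = ∑ i, lam i * g i s :=
      Finset.sum_congr rfl fun i _ => by simp only [hφ]; ring
    have e2 : ∑ i, (fun _ => c : ι → ℝ) i * lam i = c * Λ := by
      rw [hΛ, Finset.mul_sum]
    rw [e1] at h1
    rw [e2] at h2
    linarith
  refine ⟨fun i => lam i / Λ, fun i => div_nonneg (hlamnn i) hΛnn, ?_, ?_⟩
  · rw [← Finset.sum_div, ← hΛ, div_self (ne_of_gt hΛpos)]
  · intro s hs
    have h := hkey s hs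
    have e : ∑ i, lam i / Λ * g i s = (∑ i, lam i * g i s) / Λ := by
      rw [Finset.sum_div]
      exact Finset.sum_congr rfl fun i _ => by ring
    rw [e, lt_div_iff₀ hΛpos]
    exact h

/-- Sion's minimax equality for the Boolean relaxation: minimization over
`S_k = {s ∈ [0,1]^p : Σⱼ sⱼ ≤ k}` and maximization over `α ∈ ℝⁿ` can be interchanged. -/
theorem boolean_relaxation_minimax
    {n p k : ℕ} (hk1 : 1 ≤ k) (hkp : k ≤ p)
    (X : Matrix (Fin n) (Fin p) ℝ) (y : Fin n → ℝ)
    (γ : ℝ) (hγ : 0 < γ)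
    (ℓ : ℝ → ℝ → ℝ) (hconv : ∀ z : ℝ, ConvexOn ℝ Set.univ (ℓ z))
    (lhat : ℝ → ℝ → EReal)
    (hlhat : ∀ z a : ℝ, lhat z a = ⨆ u : ℝ, ((u * a - ℓ z u : ℝ) : EReal))
    (f : (Fin n → ℝ) → (Fin p → ℝ) → EReal)
    (hf : ∀ α s, f α s =
      -(∑ i, lhat (y i) (α i))
        - ((γ / 2 * ∑ j, s j * (∑ i, X i j * α i) ^ 2 : ℝ) : EReal)) :
    (⨅ s : {s : Fin p → ℝ // (∀ j, 0 ≤ s j ∧ s j ≤ 1) ∧ ∑ j, s j ≤ (k : ℝ)},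
        ⨆ α : Fin n → ℝ, f α s.1)
      =
    (⨆ α : Fin n → ℝ,
        ⨅ s : {s : Fin p → ℝ // (∀ j, 0 ≤ s j ∧ s j ≤ 1) ∧ ∑ j, s j ≤ (k : ℝ)},
          f α s.1) := by
  classical
  set T : (Fin n → ℝ) → EReal := fun α => ∑ i, lhat (y i) (α i) with hT
  set w : Fin p → (Fin n → ℝ) → ℝ := fun j α => (∑ i, X i j * α i) ^ 2 with hw
  set qq : (Fin n → ℝ) → (Fin p → ℝ) → ℝ := fun α s => γ / 2 * ∑ j, s j * w j α with hq
  set S : Set (Fin p → ℝ) :=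
    {s | (∀ j, 0 ≤ s j ∧ s j ≤ 1) ∧ ∑ j, s j ≤ (k : ℝ)} with hSdef
  have hfq : ∀ α s, f α s = -(T α) - ((qq α s : ℝ) : EReal) := by
    intro α s
    rw [hf α s]
  have h_lhat_ne_bot : ∀ z a, lhat z a ≠ ⊥ := by
    intro z a
    have h1 : ((0 * a - ℓ z 0 : ℝ) : EReal) ≤ lhat z a := by
      rw [hlhat]
      exact le_iSup (fun u : ℝ => ((u * a - ℓ z u : ℝ) : EReal)) 0
    intro hb
    rw [hb, le_bot_iff] at h1
    exact EReal.coe_ne_bot _ h1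
  have hT_ne_bot : ∀ α, T α ≠ ⊥ := fun α =>
    ereal_sum_ne_bot _ _ fun i _ => h_lhat_ne_bot _ _
  have hf_bot : ∀ α s, T α = ⊤ → f α s = ⊥ := by
    intro α s h
    rw [hfq α s, h]
    simp
  have hf_coe : ∀ α s, T α ≠ ⊤ →
      f α s = ((-(T α).toReal - qq α s : ℝ) : EReal) := by
    intro α s h
    rw [hfq α s, ← EReal.coe_toReal h (hT_ne_bot α)]
    norm_cast
  -- properties of S
  have hS0 : (fun _ => (0:ℝ) : Fin p → ℝ) ∈ S := by
    constructor
    · intro j; exact ⟨le_refl 0, zero_le_one⟩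
    · simp
  have hSne : S.Nonempty := ⟨_, hS0⟩
  have hSconv : Convex ℝ S := by
    rintro s ⟨hs1, hs2⟩ t ⟨ht1, ht2⟩ a b ha hb hab
    refine ⟨fun j => ?_, ?_⟩
    · constructor
      · have := (hs1 j).1; have := (ht1 j).1
        simp only [Pi.add_apply, Pi.smul_apply, smul_eq_mul]
        nlinarith
      · have := (hs1 j).2; have := (ht1 j).2
        simp only [Pi.add_apply, Pi.smul_apply, smul_eq_mul]
        nlinarith
    · have e : ∑ j, (a • s + b • t) j = a * ∑ j, s j + b * ∑ j, t j := by
        simp only [Pi.add_apply, Pi.smul_apply, smul_eq_mul]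
        rw [Finset.sum_add_distrib, Finset.mul_sum, Finset.mul_sum]
      rw [e]
      nlinarith
  have hSclosed : IsClosed S := by
    have h1 : IsClosed {s : Fin p → ℝ | ∀ j, 0 ≤ s j ∧ s j ≤ 1} := by
      have : {s : Fin p → ℝ | ∀ j, 0 ≤ s j ∧ s j ≤ 1}
          = ⋂ j, {s : Fin p → ℝ | 0 ≤ s j ∧ s j ≤ 1} := by
        ext s; simp [Set.mem_iInter]
      rw [this]
      refine isClosed_iInter fun j => IsClosed.inter ?_ ?_
      · exact isClosed_le continuous_const (continuous_apply j)
      · exact isClosed_le (continuous_apply j) continuous_const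
    have h2 : IsClosed {s : Fin p → ℝ | ∑ j, s j ≤ (k : ℝ)} :=
      isClosed_le (continuous_finset_sum _ fun j _ => continuous_apply j) continuous_const
    have : S = {s : Fin p → ℝ | ∀ j, 0 ≤ s j ∧ s j ≤ 1}
        ∩ {s : Fin p → ℝ | ∑ j, s j ≤ (k : ℝ)} := by
      ext s; simp [hSdef, Set.mem_inter_iff, Set.mem_setOf_eq, and_assoc]
    rw [this]
    exact h1.inter h2
  have hScompact : IsCompact S := by
    refine IsCompact.of_isClosed_subset
      (isCompact_univ_pi fun _ : Fin p => (isCompact_Icc : IsCompact (Set.Icc (0:ℝ) 1))) hSclosed ?_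
    intro s hs
    exact Set.mem_univ_pi.2 fun j => Set.mem_Icc.2 ⟨(hs.1 j).1, (hs.1 j).2⟩
  -- main claim
  have hmain : ∀ c : ℝ,
      (⨆ α : Fin n → ℝ, ⨅ s : {s : Fin p → ℝ // (∀ j, 0 ≤ s j ∧ s j ≤ 1) ∧ ∑ j, s j ≤ (k : ℝ)},
        f α s.1) < (c : EReal) →
      (⨅ s : {s : Fin p → ℝ // (∀ j, 0 ≤ s j ∧ s j ≤ 1) ∧ ∑ j, s j ≤ (k : ℝ)},
        ⨆ α : Fin n → ℝ, f α s.1) ≤ (c : EReal) := by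
    intro c hc
    have hK : ∀ α : {α : Fin n → ℝ // T α ≠ ⊤},
        IsClosed {s : Fin p → ℝ | f α.1 s ≤ (c : EReal)} := by
      intro α
      have he : {s : Fin p → ℝ | f α.1 s ≤ (c : EReal)}
          = {s : Fin p → ℝ | -(T α.1).toReal - qq α.1 s ≤ c} := by
        ext s
        rw [Set.mem_setOf_eq, Set.mem_setOf_eq, hf_coe α.1 s α.2, EReal.coe_le_coe_iff]
      rw [he]
      refine isClosed_le ?_ continuous_const
      refine Continuous.sub continuous_const ?_
      simp only [hq]
      exact continuous_const.mul
        (continuous_finset_sum _ fun j _ => (continuous_apply j).mul continuous_const)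
    have hfin : ∀ U : Finset {α : Fin n → ℝ // T α ≠ ⊤},
        (S ∩ ⋂ α ∈ U, {s : Fin p → ℝ | f α.1 s ≤ (c : EReal)}).Nonempty := by
      intro U
      by_contra hno
      -- set up separation
      set g : ↥U → (Fin p → ℝ) → ℝ := fun i s => -(T i.1.1).toReal - qq i.1.1 s with hg
      have hgc : ∀ i : ↥U, Continuous (g i) := by
        intro i
        simp only [hg, hq]
        refine Continuous.sub continuous_const ?_
        exact continuous_const.mul
          (continuous_finset_sum _ fun j _ => (continuous_apply j).mul continuous_const)
      have hgaff : ∀ (i : ↥U) (a b : ℝ) (s t : Fin p → ℝ), a + b = 1 →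
          g i (a • s + b • t) = a * g i s + b * g i t := by
        intro i a b s t hab
        simp only [hg, hq]
        have e1 : ∑ j, (a • s + b • t) j * w j i.1.1
            = a * ∑ j, s j * w j i.1.1 + b * ∑ j, t j * w j i.1.1 := by
          rw [Finset.mul_sum, Finset.mul_sum, ← Finset.sum_add_distrib]
          refine Finset.sum_congr rfl fun j _ => ?_
          simp only [Pi.add_apply, Pi.smul_apply, smul_eq_mul]
          ring
        rw [e1]
        have hb : b = 1 - a := by linarith
        subst hb
        ring
      have hnog : ¬ ∃ s ∈ S, ∀ i : ↥U, g i s ≤ c := by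
        rintro ⟨s, hsS, hsg⟩
        apply hno
        refine ⟨s, hsS, Set.mem_iInter₂.2 fun α hα => ?_⟩
        rw [Set.mem_setOf_eq, hf_coe α.1 s α.2, EReal.coe_le_coe_iff]
        exact hsg ⟨α, hα⟩
      obtain ⟨μ, hμ0, hμ1, hμkey⟩ :=
        sep_lemma hScompact hSconv hSne g hgc hgaff c hnog
      -- the convex combination
      set αh : Fin n → ℝ := fun i0 => ∑ i : ↥U, μ i * i.1.1 i0 with hαh
      set Lr : ↥U → Fin n → ℝ := fun i i0 => (lhat (y i0) (i.1.1 i0)).toReal with hLr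
      have hterm_ne_top : ∀ (i : ↥U) (i0 : Fin n), lhat (y i0) (i.1.1 i0) ≠ ⊤ := by
        intro i i0
        have hsum : ∑ i', lhat (y i') (i.1.1 i') ≠ ⊤ := i.1.2
        exact ereal_term_ne_top Finset.univ (fun i' => lhat (y i') (i.1.1 i'))
          (fun _ _ => h_lhat_ne_bot _ _) hsum i0 (Finset.mem_univ i0)
      have claim1 : ∀ i0 : Fin n,
          lhat (y i0) (αh i0) ≤ ((∑ i : ↥U, μ i * Lr i i0 : ℝ) : EReal) := by
        intro i0
        rw [hlhat]
        refine iSup_le fun uu => ?_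
        rw [EReal.coe_le_coe_iff]
        have hterm : ∀ i : ↥U, uu * i.1.1 i0 - ℓ (y i0) uu ≤ Lr i i0 := by
          intro i
          have h1 : ((uu * i.1.1 i0 - ℓ (y i0) uu : ℝ) : EReal) ≤ lhat (y i0) (i.1.1 i0) := by
            rw [hlhat]
            exact le_iSup (fun u : ℝ => ((u * i.1.1 i0 - ℓ (y i0) u : ℝ) : EReal)) uu
          have h2 := EReal.toReal_le_toReal h1 (EReal.coe_ne_bot _) (hterm_ne_top i i0)
          rwa [EReal.toReal_coe] at h2
        have e1 : uu * αh i0 - ℓ (y i0) uu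
            = ∑ i : ↥U, μ i * (uu * i.1.1 i0 - ℓ (y i0) uu) := by
          simp only [hαh, mul_sub]
          rw [Finset.sum_sub_distrib, Finset.mul_sum, ← Finset.sum_mul, hμ1, one_mul]
          congr 1
          exact Finset.sum_congr rfl fun i _ => by ring
        rw [e1]
        exact Finset.sum_le_sum fun i _ =>
          mul_le_mul_of_nonneg_left (hterm i) (hμ0 i)
      have claim2 : T αh ≤ ((∑ i0, ∑ i : ↥U, μ i * Lr i i0 : ℝ) : EReal) := by
        rw [ereal_coe_sum]
        exact Finset.sum_le_sum fun i0 _ => claim1 i0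
      have hTαh_ne_top : T αh ≠ ⊤ := by
        intro h
        rw [h, top_le_iff] at claim2
        exact EReal.coe_ne_top _ claim2
      have hAle : (T αh).toReal ≤ ∑ i0, ∑ i : ↥U, μ i * Lr i i0 := by
        have h2 := EReal.toReal_le_toReal claim2 (hT_ne_bot αh) (EReal.coe_ne_top _)
        rwa [EReal.toReal_coe] at h2
      have haR : ∀ i : ↥U, (T i.1.1).toReal = ∑ i0, Lr i i0 := by
        intro i
        simp only [hT, hLr]
        exact ereal_toReal_sum _ _ (fun _ _ => h_lhat_ne_bot _ _)
          (fun i0 _ => hterm_ne_top i i0)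
      have claim3 : ∀ j, w j αh ≤ ∑ i : ↥U, μ i * w j i.1.1 := by
        intro j
        simp only [hw]
        have hlin : ∑ i0, X i0 j * αh i0
            = ∑ i : ↥U, μ i * ∑ i0, X i0 j * i.1.1 i0 := by
          simp only [hαh]
          calc ∑ i0, X i0 j * ∑ i : ↥U, μ i * i.1.1 i0
              = ∑ i0, ∑ i : ↥U, μ i * (X i0 j * i.1.1 i0) := by
                refine Finset.sum_congr rfl fun i0 _ => ?_
                rw [Finset.mul_sum]
                exact Finset.sum_congr rfl fun i _ => by ring
            _ = ∑ i : ↥U, ∑ i0, μ i * (X i0 j * i.1.1 i0) := Finset.sum_comm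
            _ = ∑ i : ↥U, μ i * ∑ i0, X i0 j * i.1.1 i0 :=
                Finset.sum_congr rfl fun i _ => (Finset.mul_sum _ _ _).symm
        rw [hlin]
        have hcx : ConvexOn ℝ Set.univ fun x : ℝ => x ^ 2 :=
          Even.convexOn_pow even_two
        have h := hcx.map_sum_le (fun (i : ↥U) (_ : i ∈ Finset.univ) => hμ0 i) hμ1
          (fun (i : ↥U) _ => Set.mem_univ (∑ i0, X i0 j * i.1.1 i0))
        simpa only [smul_eq_mul] using h
      have hqs : ∀ s ∈ S, qq αh s ≤ ∑ i : ↥U, μ i * qq i.1.1 s := by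
        intro s hs
        simp only [hq]
        have h1 : ∑ j, s j * w j αh ≤ ∑ j, s j * ∑ i : ↥U, μ i * w j i.1.1 :=
          Finset.sum_le_sum fun j _ =>
            mul_le_mul_of_nonneg_left (claim3 j) (hs.1 j).1
        have h3 : γ / 2 * ∑ j, s j * ∑ i : ↥U, μ i * w j i.1.1
            = ∑ i : ↥U, μ i * (γ / 2 * ∑ j, s j * w j i.1.1) := by
          calc γ / 2 * ∑ j, s j * ∑ i : ↥U, μ i * w j i.1.1
              = ∑ j, ∑ i : ↥U, μ i * (γ / 2 * (s j * w j i.1.1)) := by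
                rw [Finset.mul_sum]
                refine Finset.sum_congr rfl fun j _ => ?_
                rw [Finset.mul_sum, Finset.mul_sum]
                exact Finset.sum_congr rfl fun i _ => by ring
            _ = ∑ i : ↥U, ∑ j, μ i * (γ / 2 * (s j * w j i.1.1)) := Finset.sum_comm
            _ = ∑ i : ↥U, μ i * (γ / 2 * ∑ j, s j * w j i.1.1) := by
                refine Finset.sum_congr rfl fun i _ => ?_
                rw [Finset.mul_sum, Finset.mul_sum]
        rw [← h3]
        have hγ2 : (0:ℝ) ≤ γ / 2 := by linarith
        exact mul_le_mul_of_nonneg_left h1 hγ2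
      have hfs : ∀ s ∈ S, ((c : ℝ) : EReal) ≤ f αh s := by
        intro s hs
        rw [hf_coe αh s hTαh_ne_top, EReal.coe_le_coe_iff]
        have hkey := hμkey s hs
        have e1 : ∑ i : ↥U, μ i * g i s
            = (∑ i : ↥U, μ i * -(T i.1.1).toReal) - ∑ i : ↥U, μ i * qq i.1.1 s := by
          simp only [hg, mul_sub]
          rw [Finset.sum_sub_distrib]
        have e2 : ∑ i : ↥U, μ i * -(T i.1.1).toReal
            = -(∑ i0, ∑ i : ↥U, μ i * Lr i i0) := by
          calc ∑ i : ↥U, μ i * -(T i.1.1).toReal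
              = ∑ i : ↥U, -(∑ i0, μ i * Lr i i0) := by
                refine Finset.sum_congr rfl fun i _ => ?_
                rw [haR i, mul_neg, Finset.mul_sum]
            _ = -(∑ i : ↥U, ∑ i0, μ i * Lr i i0) := by rw [Finset.sum_neg_distrib]
            _ = -(∑ i0, ∑ i : ↥U, μ i * Lr i i0) := by rw [Finset.sum_comm]
        rw [e1, e2] at hkey
        have h4 := hqs s hs
        linarith
      -- contradiction with hc
      have hle : ((c : ℝ) : EReal) ≤
          ⨆ α : Fin n → ℝ, ⨅ s : {s : Fin p → ℝ // (∀ j, 0 ≤ s j ∧ s j ≤ 1) ∧ ∑ j, s j ≤ (k : ℝ)},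
            f α s.1 := by
        have hinf : ((c : ℝ) : EReal) ≤
            ⨅ s : {s : Fin p → ℝ // (∀ j, 0 ≤ s j ∧ s j ≤ 1) ∧ ∑ j, s j ≤ (k : ℝ)}, f αh s.1 :=
          le_iInf fun s => hfs s.1 s.2
        exact le_trans hinf (le_iSup (fun α =>
          ⨅ s : {s : Fin p → ℝ // (∀ j, 0 ≤ s j ∧ s j ≤ 1) ∧ ∑ j, s j ≤ (k : ℝ)}, f α s.1) αh)
      exact absurd hc (not_lt.2 hle)
    obtain ⟨s0, hs0S, hs0K⟩ := hScompact.inter_iInter_nonempty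
      (fun α : {α : Fin n → ℝ // T α ≠ ⊤} => {s : Fin p → ℝ | f α.1 s ≤ (c : EReal)}) hK hfin
    refine iInf_le_of_le ⟨s0, hs0S⟩ ?_
    refine iSup_le fun α => ?_
    by_cases hα : T α = ⊤
    · rw [hf_bot α s0 hα]
      exact bot_le
    · exact Set.mem_iInter.1 hs0K ⟨α, hα⟩
  refine le_antisymm ?_ (iSup_iInf_le_iInf_iSup _)
  by_contra hlt
  obtain ⟨c, h1, h2⟩ := EReal.lt_iff_exists_real_btwn.1 (not_le.1 hlt)
  exact absurd (hmain c h1) (not_le.2 h2)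
end

section
/- Let y ∈ ℝ, ε ≥ 0 and α ∈ ℝ. Then the Fenchel conjugate of the squared ε-insensitive loss satisfies sup_{u ∈ ℝ} (uα − (1/2) max(0, |y − u| − ε)²) = (1/2)α² + yα + ε|α|. -/
lemma sq_eps_bound (y ε α u : ℝ) (hε : 0 ≤ ε) :
    u * α - 1 / 2 * (max 0 (|y - u| - ε)) ^ 2 ≤ 1 / 2 * α ^ 2 + y * α + ε * |α| := by
  have ht : (u - y) * α ≤ |u - y| * |α| := by
    calc (u - y) * α ≤ |(u - y) * α| := le_abs_self _
    _ = |u - y| * |α| := abs_mul _ _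
  have habs : |y - u| = |u - y| := abs_sub_comm _ _
  rcases le_total (|u - y|) ε with h | h
  · have : max 0 (|y - u| - ε) = 0 := by rw [habs]; exact max_eq_left (by linarith)
    rw [this]
    nlinarith [abs_nonneg α, sq_nonneg α, mul_le_mul_of_nonneg_right h (abs_nonneg α)]
  · have : max 0 (|y - u| - ε) = |u - y| - ε := by rw [habs]; exact max_eq_right (by linarith)
    rw [this]
    nlinarith [sq_nonneg (|u - y| - ε - |α|), abs_nonneg α, sq_abs α]

/-- Fenchel conjugate of the squared ε-insensitive loss (2-norm SVR):
`sup_u (uα − ½((|y−u|−ε)₊)²) = ½α² + yα + ε|α|`. -/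
theorem squared_eps_insensitive_fenchel_conjugate (y ε α : ℝ) (hε : 0 ≤ ε) :
    (⨆ u : ℝ, ((u * α - 1 / 2 * (max 0 (|y - u| - ε)) ^ 2 : ℝ) : EReal))
      = ((1 / 2 * α ^ 2 + y * α + ε * |α| : ℝ) : EReal) := by
  apply le_antisymm
  · exact iSup_le fun u => EReal.coe_le_coe_iff.mpr (sq_eps_bound y ε α u hε)
  · rcases le_total 0 α with h | h
    · have key : (1 / 2 * α ^ 2 + y * α + ε * |α| : ℝ)
          = (y + ε + α) * α - 1 / 2 * (max 0 (|y - (y + ε + α)| - ε)) ^ 2 := by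
        have h1 : |y - (y + ε + α)| = ε + α := by
          rw [show y - (y + ε + α) = -(ε + α) by ring, abs_neg, abs_of_nonneg (by linarith)]
        rw [h1, show ε + α - ε = α by ring, max_eq_right h, abs_of_nonneg h]; ring
      rw [key]
      exact le_iSup (fun u : ℝ => ((u * α - 1 / 2 * (max 0 (|y - u| - ε)) ^ 2 : ℝ) : EReal)) _
    · have key : (1 / 2 * α ^ 2 + y * α + ε * |α| : ℝ)
          = (y - ε + α) * α - 1 / 2 * (max 0 (|y - (y - ε + α)| - ε)) ^ 2 := by
        have h1 : |y - (y - ε + α)| = ε - α := by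
          rw [show y - (y - ε + α) = ε - α by ring, abs_of_nonneg (by linarith)]
        rw [h1, show ε - α - ε = -α by ring, max_eq_right (by linarith), abs_of_nonpos h]; ring
      rw [key]
      exact le_iSup (fun u : ℝ => ((u * α - 1 / 2 * (max 0 (|y - u| - ε)) ^ 2 : ℝ) : EReal)) _
end
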